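/- With the setup of the previous lemma, if Ψ: L¹(P) → ℝ ∪ {+∞} is convex, proper, and lower semicontinuous w.r.t. σ(L¹, L^∞), then for every Q ∈ Q_≪(P), ψ(Q) = ψ*_ρ(Q); that is, Ψ = Ψ** on densities, where Ψ*(U) = sup_{Z ∈ L¹} (∫ZU dP − Ψ(Z)) = ρ(−U) for U ∈ L^∞(P), and the biconjugate Ψ**(dQ/dP) equals the minimal penalty ψ*_ρ(Q). -/

import Mathlib

open MeasureTheory
open scoped ENNReal

variable {Ω : Type*} [MeasurableSpace Ω]

/-- Bounded measurable function. -/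
def IsBddMeas (X : Ω → ℝ) : Prop :=
  Measurable X ∧ ∃ C : ℝ, ∀ ω, |X ω| ≤ C

/-- The minimal penalty function of `ρ`, given through the biduality/conjugacy formula
`ψ*_ρ(Q) = sup_{X bounded measurable} (E_Q[-X] - ρ(X))`. -/
noncomputable def minPenalty (ρ : (Ω → ℝ) → EReal) (Q : Measure Ω) : EReal :=
  ⨆ X : {X : Ω → ℝ // IsBddMeas X},
    (((∫ ω, -(X.1 ω) ∂Q : ℝ) : EReal) - ρ X.1)

/-!
`Ψ` is proper, convex and lower semicontinuous for `σ(L¹, L^∞)`, so Hahn–Banach separation of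
points below its graph from its closed convex epigraph in `σ(L¹, L^∞) × ℝ` gives `Ψ = Ψ**`
(Fenchel–Moreau). Every continuous linear functional on `L¹(P)` is `f ↦ E_P[f X]` for a bounded
measurable `X` (Riesz on `L²`, extended by density of `L²` in `L¹`; the bound `|X| ≤ ‖φ‖` is read
off from set integrals). As `Ψ` is `ψ` on densities and `+∞` elsewhere, `Ψ*(E_P[· X]) = ρ(-X)`,
hence `ψ(Q) = Ψ**(dQ/dP) ≤ ψ*_ρ(Q)`; the reverse inequality is immediate from the definition of
`ρ`.
-/

section FenchelMoreau

open ContinuousLinearMap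

variable {F : Type*} [AddCommGroup F] [Module ℝ F] [TopologicalSpace F] {Ψ : F → EReal}

noncomputable def fenchelConjugate (Ψ : F → EReal) (φ : F →L[ℝ] ℝ) : EReal :=
  ⨆ x, ((φ x : ℝ) : EReal) - Ψ x

lemma fenchelConjugate_le_coe_iff (hΨ : ∀ x, Ψ x ≠ ⊥) {φ : F →L[ℝ] ℝ}
    {r : ℝ} : fenchelConjugate Ψ φ ≤ r ↔ ∀ x (t : ℝ), Ψ x ≤ t → φ x - t ≤ r := by
  refine ⟨fun h x t hxt => ?_, fun h => iSup_le fun x => ?_⟩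
  · have : ((φ x - t : ℝ) : EReal) ≤ fenchelConjugate Ψ φ :=
      (EReal.sub_le_sub le_rfl hxt).trans (le_iSup (fun x => ((φ x : ℝ) : EReal) - Ψ x) x)
    exact_mod_cast this.trans h
  · by_cases hx : Ψ x = ⊤
    · simp [hx]
    · rw [← EReal.coe_toReal hx (hΨ x)]
      exact_mod_cast h x _ (EReal.coe_toReal hx (hΨ x)).ge

lemma fenchelConjugate_neg_inv_smul_le (hΨ : ∀ x, Ψ x ≠ ⊥) {φ : F →L[ℝ] ℝ} {a s : ℝ}
    (ha : 0 < a) (hsep : ∀ x (t : ℝ), Ψ x ≤ t → s < φ x + a * t) :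
    fenchelConjugate Ψ (-a⁻¹ • φ) ≤ ((-(s / a) : ℝ) : EReal) := by
  refine (fenchelConjugate_le_coe_iff hΨ).mpr fun x t hxt => ?_
  have := hsep x t hxt
  have key : -a⁻¹ * φ x - t + s / a = (s - (φ x + a * t)) / a := by field_simp; ring
  simp only [smul_apply, smul_eq_mul]
  linarith [div_neg_of_neg_of_pos (sub_neg.mpr this) ha]

variable [IsTopologicalAddGroup F] [ContinuousSMul ℝ F] [LocallyConvexSpace ℝ F]

lemma exists_separation_epigraph
    (hconvex : ∀ x y : F, ∀ a b : ℝ, 0 ≤ a → 0 ≤ b → a + b = 1 →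
      Ψ (a • x + b • y) ≤ (a : EReal) * Ψ x + (b : EReal) * Ψ y)
    (hlsc : LowerSemicontinuous Ψ) {x₀ : F} {c : ℝ} (hc : (c : EReal) < Ψ x₀) :
    ∃ (φ : F →L[ℝ] ℝ) (a s : ℝ),
      φ x₀ + a * c < s ∧ ∀ x (t : ℝ), Ψ x ≤ t → s < φ x + a * t := by
  set S : Set (F × ℝ) := {p | Ψ p.1 ≤ p.2}
  have hS_closed : IsClosed S :=
    (lowerSemicontinuous_iff_isClosed_epigraph.mp hlsc).preimage
      (continuous_fst.prodMk (continuous_coe_real_ereal.comp continuous_snd))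
  have hS_convex : Convex ℝ S := by
    rintro ⟨x, t⟩ (hx : Ψ x ≤ t) ⟨y, u⟩ (hy : Ψ y ≤ u) a b ha hb hab
    calc Ψ (a • x + b • y) ≤ a * Ψ x + b * Ψ y := hconvex x y a b ha hb hab
      _ ≤ a * t + b * u := by gcongr
      _ = ((a * t + b * u : ℝ) : EReal) := by norm_cast
  obtain ⟨Λ, s, hΛx₀, hΛS⟩ :=
    geometric_hahn_banach_point_closed hS_convex hS_closed (x := (x₀, c)) (not_le.mpr hc)
  have hΛ : ∀ x t, Λ (x, t) = Λ (x, 0) + Λ (0, 1) * t := fun x t => by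
    have : ((x, t) : F × ℝ) = (x, 0) + t • (0, 1) := by simp
    rw [this, map_add, map_smul, smul_eq_mul, mul_comm]
  refine ⟨Λ.comp (.inl ℝ F ℝ), Λ (0, 1), s, ?_, fun x t hxt => ?_⟩
  · simpa [hΛ x₀ c] using hΛx₀
  · simpa [hΛ x t] using hΛS (x, t) hxt

lemma exists_fenchelConjugate_le_coe (hΨ : ∀ x, Ψ x ≠ ⊥)
    (hconvex : ∀ x y : F, ∀ a b : ℝ, 0 ≤ a → 0 ≤ b → a + b = 1 →
      Ψ (a • x + b • y) ≤ (a : EReal) * Ψ x + (b : EReal) * Ψ y)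
    (hlsc : LowerSemicontinuous Ψ) {x₀ : F} (hx₀ : Ψ x₀ ≠ ⊤) :
    ∃ (φ : F →L[ℝ] ℝ) (r : ℝ), fenchelConjugate Ψ φ ≤ r := by
  have ht₀ := EReal.coe_toReal hx₀ (hΨ x₀)
  obtain ⟨φ, a, s, hx₀s, hsep⟩ := exists_separation_epigraph hconvex hlsc
    (c := (Ψ x₀).toReal - 1) (by rw [← ht₀]; exact_mod_cast sub_one_lt _)
  have ha : 0 < a := by nlinarith [hsep x₀ _ ht₀.ge]
  exact ⟨_, _, fenchelConjugate_neg_inv_smul_le hΨ ha hsep⟩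

theorem exists_lt_sub_fenchelConjugate (hΨ : ∀ x, Ψ x ≠ ⊥) (hproper : ∃ x, Ψ x ≠ ⊤)
    (hconvex : ∀ x y : F, ∀ a b : ℝ, 0 ≤ a → 0 ≤ b → a + b = 1 →
      Ψ (a • x + b • y) ≤ (a : EReal) * Ψ x + (b : EReal) * Ψ y)
    (hlsc : LowerSemicontinuous Ψ) {x₀ : F} {c : ℝ} (hc : (c : EReal) < Ψ x₀) :
    ∃ φ : F →L[ℝ] ℝ, (c : EReal) < ((φ x₀ : ℝ) : EReal) - fenchelConjugate Ψ φ := by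
  obtain ⟨φ, a, s, hx₀s, hsep⟩ := exists_separation_epigraph hconvex hlsc hc
  obtain ⟨x₁, hx₁⟩ := hproper
  have ht₁ := EReal.coe_toReal hx₁ (hΨ x₁)
  -- the epigraph contains the vertical ray above `x₁`, on which `s < φ x₁ + a * t` forces `0 ≤ a`
  have ha : 0 ≤ a := by
    by_contra! ha
    set d := φ x₁ + a * (Ψ x₁).toReal - s
    have hd : 0 < d := by linarith [hsep x₁ _ ht₁.ge]
    have hray := hsep x₁ ((Ψ x₁).toReal + d / -a) (by
      rw [← ht₁]; exact_mod_cast le_add_of_nonneg_right (div_nonneg hd.le (by linarith)))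
    have hcancel : a * (d / -a) = -d := by field_simp [ha.ne]
    rw [mul_add, hcancel] at hray
    linarith
  rcases ha.lt_or_eq with ha | rfl
  · refine ⟨-a⁻¹ • φ, lt_of_lt_of_le ?_ (EReal.sub_le_sub le_rfl
      (fenchelConjugate_neg_inv_smul_le hΨ ha hsep))⟩
    rw [← EReal.coe_sub, EReal.coe_lt_coe_iff]
    simp only [smul_apply, smul_eq_mul, neg_mul, sub_neg_eq_add]
    have key : -(a⁻¹ * φ x₀) + s / a - c = (s - (φ x₀ + a * c)) / a := by field_simp; ring
    linarith [div_pos (sub_pos.mpr hx₀s) ha]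
  · -- now `φ x₀ < s < φ x` on the domain of `Ψ`: tilt an affine minorant of `Ψ` by `n • φ`
    simp only [zero_mul, add_zero] at hx₀s hsep
    obtain ⟨φ₁, r₁, hφ₁⟩ := exists_fenchelConjugate_le_coe hΨ hconvex hlsc hx₁
    obtain ⟨n, hn⟩ := exists_nat_gt ((c - φ₁ x₀ + r₁) / (s - φ x₀))
    have hconj : fenchelConjugate Ψ (φ₁ - n • φ) ≤ ((r₁ - n * s : ℝ) : EReal) := by
      refine (fenchelConjugate_le_coe_iff hΨ).mpr fun x t hxt => ?_
      have h₁ := (fenchelConjugate_le_coe_iff hΨ).mp hφ₁ x t hxt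
      have h₂ := mul_le_mul_of_nonneg_left (hsep x t hxt).le n.cast_nonneg
      simp only [sub_apply, smul_apply, nsmul_eq_mul]
      linarith
    refine ⟨φ₁ - n • φ, lt_of_lt_of_le ?_ (EReal.sub_le_sub le_rfl hconj)⟩
    rw [div_lt_iff₀ (sub_pos.mpr hx₀s)] at hn
    rw [← EReal.coe_sub, EReal.coe_lt_coe_iff]
    simp only [sub_apply, smul_apply, nsmul_eq_mul]
    linarith

end FenchelMoreau

namespace MeasureTheory

variable {μ : Measure Ω}

lemma AEStronglyMeasurable.exists_measurable_abs_le_ae_eq {f : Ω → ℝ}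
    (hf : AEStronglyMeasurable f μ) {C : ℝ} (hC : 0 ≤ C) (h : ∀ᵐ ω ∂μ, |f ω| ≤ C) :
    ∃ X : Ω → ℝ, Measurable X ∧ (∀ ω, |X ω| ≤ C) ∧ X =ᵐ[μ] f := by
  refine ⟨fun ω => max (-C) (min (hf.mk f ω) C),
    measurable_const.max (hf.stronglyMeasurable_mk.measurable.min measurable_const),
    fun ω => abs_le.mpr ⟨le_max_left _ _, max_le (by linarith) (min_le_right _ _)⟩, ?_⟩
  filter_upwards [h, hf.ae_eq_mk] with ω hω hmk
  rw [← hmk, min_eq_left (abs_le.mp hω).2, max_eq_right (abs_le.mp hω).1]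

lemma continuous_integral_mul_of_abs_le {X : Ω → ℝ} (hX : Measurable X) {C : ℝ}
    (hXC : ∀ ω, |X ω| ≤ C) : Continuous fun f : Lp ℝ 1 μ => ∫ ω, f ω * X ω ∂μ := by
  have hXmem : MemLp X ∞ μ :=
    memLp_top_of_bound hX.aestronglyMeasurable C (.of_forall fun ω => (hXC ω).trans_eq' rfl)
  convert (((ContinuousLinearMap.mul ℝ ℝ).lpPairing μ 1 ∞).flip hXmem.toLp).continuous
    using 2 with f
  rw [ContinuousLinearMap.flip_apply, ContinuousLinearMap.lpPairing_eq_integral]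
  exact integral_congr_ae (hXmem.coeFn_toLp.mono fun ω hω => by simp [hω])

variable [IsFiniteMeasure μ]

lemma ae_abs_le_of_forall_abs_setIntegral_le {f : Ω → ℝ} (hf : Integrable f μ) {C : ℝ}
    (h : ∀ s, MeasurableSet s → |∫ ω in s, f ω ∂μ| ≤ C * μ.real s) :
    ∀ᵐ ω ∂μ, |f ω| ≤ C := by
  have hle : f ≤ᵐ[μ] fun _ => C := ae_le_of_forall_setIntegral_le hf (integrable_const C)
    fun s hs _ => by
      rw [setIntegral_const, smul_eq_mul, mul_comm]; exact (abs_le.mp (h s hs)).2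
  have hge : (fun _ => -C) ≤ᵐ[μ] f := ae_le_of_forall_setIntegral_le (integrable_const (-C)) hf
    fun s hs _ => by
      rw [setIntegral_const, smul_eq_mul, mul_neg, mul_comm]; exact (abs_le.mp (h s hs)).1
  filter_upwards [hle, hge] with ω h₁ h₂ using abs_le.mpr ⟨h₂, h₁⟩

/-- Multiplication by `1 ∈ L²`, which Hölder's inequality makes a continuous map to `L¹`. -/
noncomputable def L2.toL1 : Lp ℝ 2 μ →L[ℝ] Lp ℝ 1 μ :=
  (ContinuousLinearMap.mul ℝ ℝ).holderL μ 2 2 1 (Lp.const 2 μ 1)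

lemma L2.coeFn_toL1 (g : Lp ℝ 2 μ) : L2.toL1 g =ᵐ[μ] g := by
  filter_upwards [ContinuousLinearMap.coeFn_holder (r := 1) (ContinuousLinearMap.mul ℝ ℝ)
    (Lp.const 2 μ (1 : ℝ)) g, Lp.coeFn_const 2 μ (1 : ℝ)] with ω h₁ h₂
  simp only [L2.toL1, ContinuousLinearMap.holderL_apply_apply, h₁, ContinuousLinearMap.mul_apply', h₂,
    Function.const_apply, one_mul]

lemma L2.toL1_indicatorConstLp {s : Set Ω} (hs : MeasurableSet s) (c : ℝ) :
    L2.toL1 (indicatorConstLp 2 hs (measure_ne_top μ s) c) =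
      indicatorConstLp 1 hs (measure_ne_top μ s) c :=
  Lp.ext ((L2.coeFn_toL1 _).trans (indicatorConstLp_coeFn.trans indicatorConstLp_coeFn.symm))

lemma L2.denseRange_toL1 : DenseRange (L2.toL1 (μ := μ)) := by
  refine (Lp.simpleFunc.denseRange ENNReal.one_ne_top).mono ?_
  rintro _ ⟨f, rfl⟩
  obtain ⟨B, hB⟩ := (Lp.simpleFunc.toSimpleFunc f).exists_forall_norm_le
  have hf₂ : MemLp (Lp.simpleFunc.toSimpleFunc f) 2 μ :=
    (memLp_top_of_bound (SimpleFunc.aestronglyMeasurable _) B (.of_forall hB)).mono_exponent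
      le_top
  exact ⟨hf₂.toLp _, Lp.ext ((L2.coeFn_toL1 _).trans
    (hf₂.coeFn_toLp.trans (Lp.simpleFunc.toSimpleFunc_eq_toFun f)))⟩

theorem L1.exists_isBddMeas_forall_eq_integral_mul (φ : StrongDual ℝ (Lp ℝ 1 μ)) :
    ∃ X : Ω → ℝ, IsBddMeas X ∧ ∀ f : Lp ℝ 1 μ, φ f = ∫ ω, f ω * X ω ∂μ := by
  set g₀ := (InnerProductSpace.toDual ℝ (Lp ℝ 2 μ)).symm (φ ∘L L2.toL1)
  have hg₀ (g : Lp ℝ 2 μ) : φ (L2.toL1 g) = inner ℝ g₀ g :=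
    (InnerProductSpace.toDual_symm_apply (y := φ ∘L L2.toL1)).symm
  have hbound (s : Set Ω) (hs : MeasurableSet s) : |∫ ω in s, g₀ ω ∂μ| ≤ ‖φ‖ * μ.real s := by
    calc |∫ ω in s, g₀ ω ∂μ|
        = |φ (L2.toL1 (indicatorConstLp 2 hs (measure_ne_top μ s) 1))| := by
          rw [hg₀, real_inner_comm, L2.inner_indicatorConstLp_one]
      _ ≤ ‖φ‖ * ‖indicatorConstLp 1 hs (measure_ne_top μ s) (1 : ℝ)‖ := by
          rw [← L2.toL1_indicatorConstLp]; exact φ.le_opNorm _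
      _ = ‖φ‖ * μ.real s := by simp [norm_indicatorConstLp one_ne_zero ENNReal.one_ne_top]
  obtain ⟨X, hXm, hXC, hXg₀⟩ := (Lp.aestronglyMeasurable g₀).exists_measurable_abs_le_ae_eq
    (norm_nonneg φ) (ae_abs_le_of_forall_abs_setIntegral_le
      ((Lp.memLp g₀).integrable one_le_two) hbound)
  refine ⟨X, ⟨hXm, _, hXC⟩, congrFun (L2.denseRange_toL1.equalizer φ.continuous
    (continuous_integral_mul_of_abs_le hXm hXC) (funext fun g => ?_))⟩
  rw [Function.comp_apply, hg₀, L2.inner_def]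
  refine integral_congr_ae ?_
  filter_upwards [L2.coeFn_toL1 g, hXg₀] with ω h₁ h₂
  simp [h₁, h₂]

end MeasureTheory

lemma EReal.coe_sub_le_of_coe_sub_le {a : ℝ} {p r : EReal} (hp : p ≠ ⊥)
    (h : (a : EReal) - p ≤ r) : (a : EReal) - r ≤ p := by
  induction p using EReal.rec with
  | bot => exact absurd rfl hp
  | top => exact le_top
  | coe p =>
    induction r using EReal.rec with
    | bot => exact absurd (le_bot_iff.mp h) (EReal.coe_ne_bot _)
    | top => simp
    | coe r => exact_mod_cast (by linarith [show a - p ≤ r by exact_mod_cast h] : a - r ≤ p)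

lemma minPenalty_le_of_forall_sub_le {ρ : (Ω → ℝ) → EReal} {Q : Measure Ω} {p : EReal}
    (hp : p ≠ ⊥) (h : ∀ X, IsBddMeas X → ((∫ ω, -X ω ∂Q : ℝ) : EReal) - p ≤ ρ X) :
    minPenalty ρ Q ≤ p :=
  iSup_le fun X => EReal.coe_sub_le_of_coe_sub_le hp (h X.1 X.2)

namespace MeasureTheory

lemma Measure.exists_Lp_ae_eq_toReal_rnDeriv (Q P : Measure Ω) [IsFiniteMeasure Q] :
    ∃ D : Lp ℝ 1 P, D =ᵐ[P] fun ω => (Q.rnDeriv P ω).toReal :=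
  ⟨_, Measure.integrable_toReal_rnDeriv.coeFn_toL1⟩

lemma Measure.eq_of_toReal_rnDeriv_ae_eq {P Q Q' : Measure Ω} [SigmaFinite P] [SigmaFinite Q]
    [SigmaFinite Q'] (hQ : Q ≪ P) (hQ' : Q' ≪ P)
    (h : (fun ω => (Q.rnDeriv P ω).toReal) =ᵐ[P] fun ω => (Q'.rnDeriv P ω).toReal) : Q = Q' := by
  have h' : Q.rnDeriv P =ᵐ[P] Q'.rnDeriv P := by
    filter_upwards [h, Q.rnDeriv_lt_top P, Q'.rnDeriv_lt_top P] with ω hω hQω hQ'ω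
    exact (ENNReal.toReal_eq_toReal_iff' hQω.ne hQ'ω.ne).mp hω
  rw [← Measure.withDensity_rnDeriv_eq Q P hQ, ← Measure.withDensity_rnDeriv_eq Q' P hQ',
    withDensity_congr_ae h']

lemma integral_eq_integral_mul_of_ae_eq_toReal_rnDeriv {P Q : Measure Ω} [SigmaFinite Q]
    [Q.HaveLebesgueDecomposition P] (hQP : Q ≪ P) {D : Ω → ℝ}
    (hD : D =ᵐ[P] fun ω => (Q.rnDeriv P ω).toReal) (g : Ω → ℝ) :
    ∫ ω, g ω ∂Q = ∫ ω, D ω * g ω ∂P := by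
  rw [← integral_rnDeriv_smul hQP]
  exact integral_congr_ae (hD.mono fun ω hω => by simp [hω])

end MeasureTheory

section Identification

variable {P : Measure Ω} {K : Set (Measure Ω)} {ψ : Measure Ω → EReal} {Ψ : Lp ℝ 1 P → EReal}

lemma identification_apply_eq_of_ae_eq_toReal_rnDeriv [SigmaFinite P]
    (hKsub : ∀ Q ∈ K, IsProbabilityMeasure Q ∧ Q ≪ P) (hψ_top : ∀ Q, Q ∉ K → ψ Q = ⊤)
    (hΨ_on : ∀ Q ∈ K, ∀ D : Lp ℝ 1 P,
      ((D : Ω → ℝ) =ᵐ[P] fun ω => (Q.rnDeriv P ω).toReal) → Ψ D = ψ Q)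
    (hΨ_off : ∀ D : Lp ℝ 1 P,
      (¬ ∃ Q ∈ K, (D : Ω → ℝ) =ᵐ[P] fun ω => (Q.rnDeriv P ω).toReal) → Ψ D = ⊤)
    {Q : Measure Ω} [SigmaFinite Q] (hQP : Q ≪ P) {D : Lp ℝ 1 P}
    (hD : (D : Ω → ℝ) =ᵐ[P] fun ω => (Q.rnDeriv P ω).toReal) : Ψ D = ψ Q := by
  by_cases hQK : Q ∈ K
  · exact hΨ_on Q hQK D hD
  rw [hψ_top Q hQK]
  refine hΨ_off D fun ⟨Q', hQ'K, hQ'⟩ => hQK ?_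
  have := (hKsub Q' hQ'K).1
  rwa [Measure.eq_of_toReal_rnDeriv_ae_eq hQP (hKsub Q' hQ'K).2 (hD.symm.trans hQ')]

lemma fenchelConjugate_eq_iSup_integral_sub [SigmaFinite P]
    (hKsub : ∀ Q ∈ K, IsProbabilityMeasure Q ∧ Q ≪ P)
    (hΨ_on : ∀ Q ∈ K, ∀ D : Lp ℝ 1 P,
      ((D : Ω → ℝ) =ᵐ[P] fun ω => (Q.rnDeriv P ω).toReal) → Ψ D = ψ Q)
    (hΨ_off : ∀ D : Lp ℝ 1 P,
      (¬ ∃ Q ∈ K, (D : Ω → ℝ) =ᵐ[P] fun ω => (Q.rnDeriv P ω).toReal) → Ψ D = ⊤)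
    {φ : Lp ℝ 1 P →L[ℝ] ℝ} {X : Ω → ℝ} (hφ : ∀ f : Lp ℝ 1 P, φ f = ∫ ω, f ω * X ω ∂P) :
    fenchelConjugate Ψ φ = ⨆ Q ∈ K, ((∫ ω, X ω ∂Q : ℝ) : EReal) - ψ Q := by
  have hdensity (Q) (hQK : Q ∈ K) (D : Lp ℝ 1 P)
      (hD : (D : Ω → ℝ) =ᵐ[P] fun ω => (Q.rnDeriv P ω).toReal) :
      ((φ D : ℝ) : EReal) - Ψ D = ((∫ ω, X ω ∂Q : ℝ) : EReal) - ψ Q := by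
    have := (hKsub Q hQK).1
    rw [hΨ_on Q hQK D hD, hφ,
      ← integral_eq_integral_mul_of_ae_eq_toReal_rnDeriv (hKsub Q hQK).2 hD]
  refine le_antisymm (iSup_le fun D => ?_) (iSup₂_le fun Q hQK => ?_)
  · by_cases hD : ∃ Q ∈ K, (D : Ω → ℝ) =ᵐ[P] fun ω => (Q.rnDeriv P ω).toReal
    · obtain ⟨Q, hQK, hDQ⟩ := hD
      exact (hdensity Q hQK D hDQ).trans_le (le_iSup₂_of_le Q hQK le_rfl)
    · simp [hΨ_off D hD]
  · have := (hKsub Q hQK).1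
    obtain ⟨D, hD⟩ := Measure.exists_Lp_ae_eq_toReal_rnDeriv Q P
    exact (hdensity Q hQK D hD).symm.trans_le (le_iSup (fun D => ((φ D : ℝ) : EReal) - Ψ D) D)

end Identification

theorem identification_lsc_implies_minimal_penalty_general
    (P : Measure Ω) [IsProbabilityMeasure P]
    (K : Set (Measure Ω))
    (hKsub : ∀ Q ∈ K, IsProbabilityMeasure Q ∧ Q ≪ P)
    (ψ : Measure Ω → EReal)
    (hψ_ne_bot : ∀ Q, ψ Q ≠ ⊥)
    (hψ_top : ∀ Q, Q ∉ K → ψ Q = ⊤)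
    (ρ : (Ω → ℝ) → EReal)
    (hρ : ∀ X : Ω → ℝ,
      ρ X = ⨆ Q ∈ K, (((∫ ω, -X ω ∂Q : ℝ) : EReal) - ψ Q))
    (Ψ : Lp ℝ 1 P → EReal)
    (hΨ_on : ∀ Q ∈ K, ∀ D : Lp ℝ 1 P,
      ((D : Ω → ℝ) =ᵐ[P] fun ω => (Q.rnDeriv P ω).toReal) → Ψ D = ψ Q)
    (hΨ_off : ∀ D : Lp ℝ 1 P,
      (¬ ∃ Q ∈ K, (D : Ω → ℝ) =ᵐ[P] fun ω => (Q.rnDeriv P ω).toReal) → Ψ D = ⊤)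
    -- Ψ is proper:
    (hproper : ∃ D, Ψ D ≠ ⊤) (hne_bot : ∀ D, Ψ D ≠ ⊥)
    -- Ψ is convex:
    (hconvex : ∀ D₁ D₂ : Lp ℝ 1 P, ∀ a b : ℝ, 0 ≤ a → 0 ≤ b → a + b = 1 →
      Ψ (a • D₁ + b • D₂) ≤ (a : EReal) * Ψ D₁ + (b : EReal) * Ψ D₂)
    -- Ψ is lower semicontinuous w.r.t. the weak topology σ(L¹, L^∞):
    (hlsc : LowerSemicontinuous (fun z : WeakSpace ℝ (Lp ℝ 1 P) =>
      Ψ ((toWeakSpace ℝ (Lp ℝ 1 P)).symm z))) :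
    ∀ Q : Measure Ω, IsProbabilityMeasure Q → Q ≪ P → ψ Q = minPenalty ρ Q := by
  intro Q hQ hQP
  refine le_antisymm ?_ (minPenalty_le_of_forall_sub_le (hψ_ne_bot Q) fun X _ => ?_)
  · obtain ⟨D, hD⟩ := Measure.exists_Lp_ae_eq_toReal_rnDeriv Q P
    rw [← identification_apply_eq_of_ae_eq_toReal_rnDeriv hKsub hψ_top hΨ_on hΨ_off hQP hD]
    by_contra! hlt
    obtain ⟨c, hc_lt, hlt_c⟩ := EReal.exists_between_coe_real hlt
    have : LocallyConvexSpace ℝ (WeakSpace ℝ (Lp ℝ 1 P)) := WeakBilin.locallyConvexSpace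
    obtain ⟨φ, hφ⟩ := exists_lt_sub_fenchelConjugate (Ψ := fun z => Ψ ((toWeakSpace ℝ _).symm z))
      (x₀ := toWeakSpace ℝ _ D) (fun _ => hne_bot _) hproper hconvex hlsc hlt_c
    -- `WeakSpace` is a type synonym, so `φ` is also a continuous functional on `L¹(P)`
    set φ₁ : Lp ℝ 1 P →L[ℝ] ℝ := φ ∘L toWeakSpaceCLM ℝ _
    replace hφ : (c : EReal) < (φ₁ D : EReal) - fenchelConjugate Ψ φ₁ := hφ
    obtain ⟨X, hX, hφ₁X⟩ := L1.exists_isBddMeas_forall_eq_integral_mul φ₁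
    have hXneg : IsBddMeas (-X) := ⟨hX.1.neg, hX.2.imp fun C hC ω => by simpa using hC ω⟩
    have hdual : (φ₁ D : EReal) - fenchelConjugate Ψ φ₁ =
        ((∫ ω, -(-X) ω ∂Q : ℝ) : EReal) - ρ (-X) := by
      rw [hρ, fenchelConjugate_eq_iSup_integral_sub hKsub hΨ_on hΨ_off hφ₁X, hφ₁X,
        ← integral_eq_integral_mul_of_ae_eq_toReal_rnDeriv hQP hD]
      simp
    exact (hc_lt.trans (hφ.trans_eq hdual)).not_ge (le_iSup_of_le ⟨-X, hXneg⟩ le_rfl)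
  · by_cases hQK : Q ∈ K
    · rw [hρ]
      exact le_iSup₂_of_le Q hQK le_rfl
    · simp [hψ_top Q hQK]

/-- In the setting of the previous lemma, if the identification `Ψ` of the
penalty `ψ` on `L¹(P)` is proper, convex and lower semicontinuous w.r.t. `σ(L¹, L^∞)`, then
`ψ` coincides with the minimal penalty `ψ*_ρ` of `ρ(X) = sup_{Q∈K}(E_Q[-X] - ψ(Q))` on the
set of all probability measures absolutely continuous w.r.t. `P`
(`Ψ = Ψ**` on densities; `Ψ*(U) = ρ(-U)` is the Fenchel–Legendre conjugate). -/
theorem identification_lsc_implies_minimal_penalty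
    (P : Measure Ω) [IsProbabilityMeasure P]
    (K : Set (Measure Ω))
    (hKsub : ∀ Q ∈ K, IsProbabilityMeasure Q ∧ Q ≪ P)
    (hKconv : ∀ Q ∈ K, ∀ Q' ∈ K, ∀ a b : ℝ≥0∞, a + b = 1 → a • Q + b • Q' ∈ K)
    (hKclosed : IsClosed {f : Lp ℝ 1 P |
      ∃ Q ∈ K, (f : Ω → ℝ) =ᵐ[P] fun ω => (Q.rnDeriv P ω).toReal})
    (ψ : Measure Ω → EReal)
    (hψ_ne_bot : ∀ Q, ψ Q ≠ ⊥)
    (hψ_top : ∀ Q, Q ∉ K → ψ Q = ⊤)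
    (hinf_ne_bot : (⨅ Q ∈ K, ψ Q) ≠ ⊥) (hinf_ne_top : (⨅ Q ∈ K, ψ Q) ≠ ⊤)
    (ρ : (Ω → ℝ) → EReal)
    (hρ : ∀ X : Ω → ℝ,
      ρ X = ⨆ Q ∈ K, (((∫ ω, -X ω ∂Q : ℝ) : EReal) - ψ Q))
    (Ψ : Lp ℝ 1 P → EReal)
    (hΨ_on : ∀ Q ∈ K, ∀ D : Lp ℝ 1 P,
      ((D : Ω → ℝ) =ᵐ[P] fun ω => (Q.rnDeriv P ω).toReal) → Ψ D = ψ Q)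
    (hΨ_off : ∀ D : Lp ℝ 1 P,
      (¬ ∃ Q ∈ K, (D : Ω → ℝ) =ᵐ[P] fun ω => (Q.rnDeriv P ω).toReal) → Ψ D = ⊤)
    -- Ψ is proper:
    (hproper : ∃ D, Ψ D ≠ ⊤) (hne_bot : ∀ D, Ψ D ≠ ⊥)
    -- Ψ is convex:
    (hconvex : ∀ D₁ D₂ : Lp ℝ 1 P, ∀ a b : ℝ, 0 ≤ a → 0 ≤ b → a + b = 1 →
      Ψ (a • D₁ + b • D₂) ≤ (a : EReal) * Ψ D₁ + (b : EReal) * Ψ D₂)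
    -- Ψ is lower semicontinuous w.r.t. the weak topology σ(L¹, L^∞):
    (hlsc : LowerSemicontinuous (fun z : WeakSpace ℝ (Lp ℝ 1 P) =>
      Ψ ((toWeakSpace ℝ (Lp ℝ 1 P)).symm z))) :
    ∀ Q : Measure Ω, IsProbabilityMeasure Q → Q ≪ P → ψ Q = minPenalty ρ Q :=
  identification_lsc_implies_minimal_penalty_general P K hKsub ψ hψ_ne_bot hψ_top ρ hρ Ψ hΨ_on
    hΨ_off hproper hne_bot hconvex hlsc
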